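/- Let a ≥ 1, let x ≥ 0, let n⃗ = (n_0,…,n_x) be positive integers, let T⃗_x be a system of trees which is (2^{a−1}n_0,…,2^{a−1}n_x)-good from a tuple of strings α⃗_x, and let P_1,…,P_a be sets of (x+1)-tuples of strings such that every element of T⃗_x belongs to P_1 ∪ … ∪ P_a. Then for some i with 1 ≤ i ≤ a, there is a system of trees, each of whose elements is an element of T⃗_x, which is n⃗-good from α⃗_x for P_i. -/

import Mathlib

/-!
For a single tree, `a·n`-goodness already suffices: by induction on the height, each successor
subtree of the root contains an `n`-good monochromatic subtree, and among the `a·n` successors of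
the root `n` share a colour. For a system, descend from level `x` to level `0` along a fixed path:
once each string `σ` at level `k` is coloured by a colour for which the levels above `σ` carry a
good monochromatic subsystem, the single-tree result applied to level `k` picks a good
monochromatic subtree, and grafting the subsystems above its strings onto it gives a good
monochromatic subsystem from level `k`. Since `a ≤ 2^(a-1)`, the hypothesis gives
`a·n_k`-goodness at every level.
-/

/-- A *tree*: a finite set of pairwise incomparable strings (antichain under
the prefix/extension order), where a string is a finite sequence of naturals. -/
def IsTree (T : Finset (List ℕ)) : Prop :=
  ∀ σ ∈ T, ∀ τ ∈ T, σ <+: τ → σ = τ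

/-- `T` is `a`-good from `σ`: `T` is nonempty, every string in `T` extends `σ`,
and for every `τ` with `σ ⊆ τ ⊊ ρ` for some `ρ ∈ T`, at least `a` immediate
successors `τ*k` of `τ` are initial segments of elements of `T`. -/
def GoodFrom (a : ℕ) (T : Finset (List ℕ)) (σ : List ℕ) : Prop :=
  T.Nonempty ∧ (∀ ρ ∈ T, σ <+: ρ) ∧
    ∀ τ : List ℕ, (∃ ρ ∈ T, σ <+: τ ∧ τ <+: ρ ∧ τ ≠ ρ) →
      a ≤ {k : ℕ | ∃ ρ ∈ T, τ ++ [k] <+: ρ}.ncard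

/-- `T` is `a`-good from `σ` for `P`: in addition `T ⊆ P`. -/
def GoodFromFor (a : ℕ) (T : Finset (List ℕ)) (σ : List ℕ) (P : Set (List ℕ)) : Prop :=
  GoodFrom a T σ ∧ ↑T ⊆ P

/-- A *system of trees* `T⃗ = (T_0, …, T_x)`: a tree `T_0` together with,
recursively, for each tuple `(σ_0, …, σ_{k-1})`, a tree `T_k(σ_0, …, σ_{k-1})`;
formally, the tree at level `k` is a function of the strings at the levels `< k`. -/
def TreeSystem (x : ℕ) : Type :=
  (k : Fin (x + 1)) → ((j : Fin (k : ℕ)) → List ℕ) → Finset (List ℕ)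

/-- Restriction of a tuple of strings to the coordinates below `k`. -/
def restrictBelow {x : ℕ} (k : Fin (x + 1)) (β : Fin (x + 1) → List ℕ) :
    (j : Fin (k : ℕ)) → List ℕ :=
  fun j => β ⟨j, j.isLt.trans k.isLt⟩

/-- Every level of the system is a tree (finite antichain). -/
def IsTreeSystem {x : ℕ} (T : TreeSystem x) : Prop :=
  ∀ k ρ, IsTree (T k ρ)

/-- `β` is an element of the subsystem `(T_0, …, T_{K-1})`:
`β k ∈ T_k(β_0, …, β_{k-1})` for all `k < K`. -/
def SysMemUpTo {x : ℕ} (T : TreeSystem x) (K : Fin (x + 1))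
    (β : Fin (x + 1) → List ℕ) : Prop :=
  ∀ k, k < K → β k ∈ T k (restrictBelow k β)

/-- `β` is an element of the system `T⃗`: `β k ∈ T_k(β_0, …, β_{k-1})` for all `k`. -/
def SysElem {x : ℕ} (T : TreeSystem x) (β : Fin (x + 1) → List ℕ) : Prop :=
  ∀ k, β k ∈ T k (restrictBelow k β)

/-- The subsystem `(T_0, …, T_{K-1})` is `(n_0, …, n_{K-1})`-good from `σ⃗`. -/
def SysGoodBelow {x : ℕ} (n : Fin (x + 1) → ℕ) (T : TreeSystem x)
    (σ : Fin (x + 1) → List ℕ) (K : Fin (x + 1)) : Prop :=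
  ∀ k, k < K → ∀ β, SysMemUpTo T k β →
    GoodFrom (n k) (T k (restrictBelow k β)) (σ k)

/-- The system `T⃗` is `n⃗`-good from `σ⃗`: for each `k` and each element
`β⃗_{k-1}` of the subsystem `(T_0, …, T_{k-1})`, the tree `T_k(β⃗_{k-1})`
is `n_k`-good from `σ_k`. -/
def SysGoodFrom {x : ℕ} (n : Fin (x + 1) → ℕ) (T : TreeSystem x)
    (σ : Fin (x + 1) → List ℕ) : Prop :=
  ∀ k β, SysMemUpTo T k β → GoodFrom (n k) (T k (restrictBelow k β)) (σ k)

/-- The system `T⃗` is `n⃗`-good from `σ⃗` for `P`: in addition every element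
of the system belongs to `P`. -/
def SysGoodFromFor {x : ℕ} (n : Fin (x + 1) → ℕ) (T : TreeSystem x)
    (σ : Fin (x + 1) → List ℕ) (P : Set (Fin (x + 1) → List ℕ)) : Prop :=
  SysGoodFrom n T σ ∧ ∀ β, SysElem T β → β ∈ P

/-- `ξ⃗` componentwise extends `β⃗`. -/
def TupleExtends {x : ℕ} (β ξ : Fin (x + 1) → List ℕ) : Prop :=
  ∀ k, β k <+: ξ k

/-- A set of tuples of strings is *open* if it is closed under componentwise
extension. -/
def IsOpenTupleSet {x : ℕ} (P : Set (Fin (x + 1) → List ℕ)) : Prop :=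
  ∀ β ∈ P, ∀ ξ, TupleExtends β ξ → ξ ∈ P

open Finset

def successors (T : Finset (List ℕ)) (τ : List ℕ) : Set ℕ :=
  {k | ∃ ρ ∈ T, τ ++ [k] <+: ρ}

theorem eq_of_append_singleton_prefix {τ ρ : List ℕ} {k k' : ℕ} (h : τ ++ [k] <+: ρ)
    (h' : τ ++ [k'] <+: ρ) : k = k' := by
  rcases List.prefix_or_prefix_of_prefix h h' with hp | hp
  · simpa using hp.eq_of_length (by simp)
  · simpa using (hp.eq_of_length (by simp)).symm

theorem successors_finite (T : Finset (List ℕ)) (τ : List ℕ) : (successors T τ).Finite := by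
  refine (T.finite_toSet.biUnion fun ρ _ => ?_).subset fun k ⟨ρ, hρ, hk⟩ => Set.mem_biUnion hρ hk
  exact Set.Subsingleton.finite fun k hk k' hk' => eq_of_append_singleton_prefix hk hk'

theorem ncard_successors_mono {S T : Finset (List ℕ)} (h : S ⊆ T) (τ : List ℕ) :
    (successors S τ).ncard ≤ (successors T τ).ncard :=
  Set.ncard_le_ncard (fun _ ⟨ρ, hρ, hk⟩ => ⟨ρ, h hρ, hk⟩) (successors_finite T τ)

theorem GoodFrom.mono {m m' : ℕ} {T : Finset (List ℕ)} {σ : List ℕ} (h : GoodFrom m' T σ)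
    (hm : m ≤ m') : GoodFrom m T σ :=
  ⟨h.1, h.2.1, fun τ hτ => hm.trans (h.2.2 τ hτ)⟩

theorem goodFrom_singleton (m : ℕ) (σ : List ℕ) : GoodFrom m {σ} σ := by
  refine ⟨singleton_nonempty σ, fun ρ hρ => (mem_singleton.1 hρ).symm ▸ List.prefix_refl σ, ?_⟩
  rintro τ ⟨ρ, hρ, hστ, hτρ, hne⟩
  obtain rfl := mem_singleton.1 hρ
  exact absurd (hτρ.eq_of_length_le hστ.length_le) hne

theorem GoodFrom.filter_prefix {m : ℕ} {T : Finset (List ℕ)} {σ : List ℕ} {k : ℕ}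
    (h : GoodFrom m T σ) (hk : k ∈ successors T σ) :
    GoodFrom m (T.filter (σ ++ [k] <+: ·)) (σ ++ [k]) := by
  obtain ⟨ρ, hρ, hkρ⟩ := hk
  refine ⟨⟨ρ, mem_filter.2 ⟨hρ, hkρ⟩⟩, fun ρ hρ => (mem_filter.1 hρ).2, ?_⟩
  rintro τ ⟨ρ', hρ', hkτ, hτρ', hne⟩
  have hτ : m ≤ (successors T τ).ncard :=
    h.2.2 τ ⟨ρ', (mem_filter.1 hρ').1, (List.prefix_append σ [k]).trans hkτ, hτρ', hne⟩
  refine hτ.trans (Set.ncard_le_ncard ?_ (successors_finite _ _))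
  rintro j ⟨ρ'', hρ'', hj⟩
  exact ⟨ρ'', mem_filter.2 ⟨hρ'', hkτ.trans ((List.prefix_append τ [j]).trans hj)⟩, hj⟩

theorem goodFrom_biUnion {n : ℕ} {σ : List ℕ} {K : Finset ℕ} {S : ℕ → Finset (List ℕ)}
    (hK : K.Nonempty) (hnK : n ≤ #K) (hS : ∀ k ∈ K, GoodFrom n (S k) (σ ++ [k])) :
    GoodFrom n (K.biUnion S) σ := by
  have hsucc : ∀ k ∈ K, ∃ ρ ∈ K.biUnion S, σ ++ [k] <+: ρ := fun k hk =>
    let ⟨ρ, hρ⟩ := (hS k hk).1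
    ⟨ρ, mem_biUnion.2 ⟨k, hk, hρ⟩, (hS k hk).2.1 ρ hρ⟩
  refine ⟨?_, ?_, ?_⟩
  · obtain ⟨k, hk⟩ := hK
    obtain ⟨ρ, hρ, -⟩ := hsucc k hk
    exact ⟨ρ, hρ⟩
  · intro ρ hρ
    obtain ⟨k, hk, hρk⟩ := mem_biUnion.1 hρ
    exact (List.prefix_append σ [k]).trans ((hS k hk).2.1 ρ hρk)
  · rintro τ ⟨ρ, hρ, hστ, hτρ, hne⟩
    obtain ⟨k, hk, hρk⟩ := mem_biUnion.1 hρ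
    rcases eq_or_ne σ τ with rfl | hστ'
    · calc n ≤ #K := hnK
        _ = (K : Set ℕ).ncard := (Set.ncard_coe_finset K).symm
        _ ≤ _ := Set.ncard_le_ncard hsucc (successors_finite _ _)
    · have hlen : (σ ++ [k]).length ≤ τ.length := by
        have := hστ.length_le
        have := mt hστ.eq_of_length hστ'
        simp only [List.length_append, List.length_singleton]
        omega
      have hkτ := List.prefix_of_prefix_length_le ((hS k hk).2.1 ρ hρk) hτρ hlen
      exact ((hS k hk).2.2 τ ⟨ρ, hρk, hkτ, hτρ, hne⟩).trans
        (ncard_successors_mono (subset_biUnion_of_mem S hk) τ)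

theorem exists_monochromatic_subset_of_mem {ι : Type*} {n : ℕ} (c : List ℕ → ι)
    {T : Finset (List ℕ)} {σ : List ℕ} (hσ : σ ∈ T) :
    ∃ i, ∃ S ⊆ T, GoodFrom n S σ ∧ ∀ ρ ∈ S, c ρ = i :=
  ⟨c σ, {σ}, singleton_subset_iff.2 hσ, goodFrom_singleton n σ, fun ρ hρ => by
    rw [mem_singleton.1 hρ]⟩

theorem GoodFrom.exists_monochromatic_subset {ι : Type*} [Fintype ι] {n : ℕ} (hn : 1 ≤ n)
    (c : List ℕ → ι) {T : Finset (List ℕ)} {σ : List ℕ}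
    (h : GoodFrom (Fintype.card ι * n) T σ) :
    ∃ i, ∃ S ⊆ T, GoodFrom n S σ ∧ ∀ ρ ∈ S, c ρ = i := by
  classical
  suffices key : ∀ d (T : Finset (List ℕ)) σ, (∀ ρ ∈ T, ρ.length ≤ σ.length + d) →
      GoodFrom (Fintype.card ι * n) T σ → ∃ i, ∃ S ⊆ T, GoodFrom n S σ ∧ ∀ ρ ∈ S, c ρ = i from
    key _ T σ (fun ρ hρ => (le_sup (f := List.length) hρ).trans (Nat.le_add_left _ _)) h
  intro d
  induction d with
  | zero =>
    intro T σ hlen h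
    obtain ⟨ρ, hρ⟩ := h.1
    obtain rfl : σ = ρ := (h.2.1 ρ hρ).eq_of_length_le (hlen ρ hρ)
    exact exists_monochromatic_subset_of_mem c hρ
  | succ d ih =>
    intro T σ hlen h
    by_cases hσ : σ ∈ T
    · exact exists_monochromatic_subset_of_mem c hσ
    obtain ⟨ρ₀, hρ₀⟩ := h.1
    have : Nonempty ι := ⟨c ρ₀⟩
    set K := (successors_finite T σ).toFinset
    have hK : Fintype.card ι * n ≤ #K := by
      rw [← Set.ncard_eq_toFinset_card _ (successors_finite T σ)]
      exact h.2.2 σ ⟨ρ₀, hρ₀, List.prefix_refl σ, h.2.1 ρ₀ hρ₀, fun he => hσ (he ▸ hρ₀)⟩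
    have hsub : ∀ k ∈ K, ∃ i, ∃ S ⊆ T.filter (σ ++ [k] <+: ·),
        GoodFrom n S (σ ++ [k]) ∧ ∀ ρ ∈ S, c ρ = i := by
      intro k hk
      refine ih _ _ (fun ρ hρ => ?_) (h.filter_prefix (Set.Finite.mem_toFinset _ |>.1 hk))
      have := hlen ρ (mem_filter.1 hρ).1
      simp only [List.length_append, List.length_singleton]
      omega
    choose! col S hST hS hSc using hsub
    obtain ⟨i, -, hi⟩ := exists_le_card_fiber_of_mul_le_card_of_maps_to
      (fun k _ => mem_univ (col k)) univ_nonempty (by rwa [card_univ])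
    set F := K.filter (col · = i)
    have hF : ∀ k ∈ F, k ∈ K ∧ col k = i := fun k hk => mem_filter.1 hk
    refine ⟨i, F.biUnion S, fun ρ hρ => ?_, goodFrom_biUnion (card_pos.1 (by omega)) hi
      fun k hk => hS k (hF k hk).1, fun ρ hρ => ?_⟩
    · obtain ⟨k, hk, hρk⟩ := mem_biUnion.1 hρ
      exact (mem_filter.1 (hST k (hF k hk).1 hρk)).1
    · obtain ⟨k, hk, hρk⟩ := mem_biUnion.1 hρ
      rw [hSc k (hF k hk).1 ρ hρk, (hF k hk).2]

section Subsystems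

variable {x : ℕ}

theorem SysGoodFrom.mono {m m' : Fin (x + 1) → ℕ} {T : TreeSystem x}
    {α : Fin (x + 1) → List ℕ} (h : SysGoodFrom m' T α) (hm : ∀ j, m j ≤ m' j) :
    SysGoodFrom m T α :=
  fun j β hβ => (h j β hβ).mono (hm j)

theorem restrictBelow_update {j k : Fin (x + 1)} (hjk : j ≤ k) (β : Fin (x + 1) → List ℕ)
    (σ : List ℕ) : restrictBelow j (Function.update β k σ) = restrictBelow j β := by
  funext i
  refine Function.update_of_ne (fun h => ?_) _ _
  have hik : (i : ℕ) = k := congrArg Fin.val h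
  have : (j : ℕ) ≤ k := hjk
  omega

/-- The invariant of the downward induction on `k`: only the strings `β j` with `j < k` matter,
and they form the single path that `S` follows below level `k`. -/
structure IsGoodSubsystemAbove (T : TreeSystem x) (n : Fin (x + 1) → ℕ)
    (α : Fin (x + 1) → List ℕ) (P : Set (Fin (x + 1) → List ℕ)) (k : ℕ)
    (β : Fin (x + 1) → List ℕ) (S : TreeSystem x) : Prop where
  isTreeSystem : IsTreeSystem S
  eq_singleton : ∀ (j : Fin (x + 1)) ρ, (j : ℕ) < k → S j ρ = {β j}
  sysElem : ∀ β', SysElem S β' → SysElem T β'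
  goodFrom : ∀ (j : Fin (x + 1)) β', k ≤ (j : ℕ) → SysMemUpTo S j β' →
    GoodFrom (n j) (S j (restrictBelow j β')) (α j)
  mem : ∀ β', SysElem S β' → β' ∈ P

def pathSystem (β : Fin (x + 1) → List ℕ) : TreeSystem x :=
  fun j _ => {β j}

theorem isGoodSubsystemAbove_pathSystem {T : TreeSystem x} {n : Fin (x + 1) → ℕ}
    {α : Fin (x + 1) → List ℕ} {P : Set (Fin (x + 1) → List ℕ)} {β : Fin (x + 1) → List ℕ}
    (hβ : SysElem T β) (hβP : β ∈ P) :
    IsGoodSubsystemAbove T n α P (x + 1) β (pathSystem β) := by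
  have elem : ∀ β', SysElem (pathSystem β) β' → β' = β :=
    fun β' h => funext fun j => Finset.mem_singleton.1 (h j)
  refine ⟨fun j ρ σ hσ τ hτ _ => ?_, fun _ _ _ => rfl, fun β' h => elem β' h ▸ hβ,
    fun j _ hj => absurd j.isLt (by omega), fun β' h => elem β' h ▸ hβP⟩
  rw [Finset.mem_singleton.1 hσ, Finset.mem_singleton.1 hτ]

/-- Follows `β` below level `k`, has the tree `R` at level `k`, and continues as `S σ` above a
string `σ ∈ R`. -/
def graft (k : Fin (x + 1)) (β : Fin (x + 1) → List ℕ) (R : Finset (List ℕ))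
    (S : List ℕ → TreeSystem x) : TreeSystem x :=
  fun j ρ =>
    if hj : j < k then {β j}
    else if hjk : j = k then R
    else
      have hkj : k < j := lt_of_le_of_ne (not_lt.1 hj) (Ne.symm hjk)
      if ρ ⟨k, hkj⟩ ∈ R then S (ρ ⟨k, hkj⟩) j ρ else ∅

end Subsystems

section Graft

variable {x : ℕ} {k : Fin (x + 1)} {β : Fin (x + 1) → List ℕ} {R : Finset (List ℕ)}
  {S : List ℕ → TreeSystem x}

theorem graft_of_lt {j : Fin (x + 1)} (hj : j < k) (ρ : Fin j → List ℕ) :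
    graft k β R S j ρ = {β j} :=
  dif_pos hj

theorem graft_self (ρ : Fin k → List ℕ) : graft k β R S k ρ = R := by
  simp [graft]

theorem graft_of_gt {j : Fin (x + 1)} (hkj : k < j) (ρ : Fin j → List ℕ) :
    graft k β R S j ρ = if ρ ⟨k, hkj⟩ ∈ R then S (ρ ⟨k, hkj⟩) j ρ else ∅ := by
  simp only [graft, dif_neg (not_lt.2 hkj.le), dif_neg hkj.ne']

theorem graft_restrictBelow_of_gt {j : Fin (x + 1)} (hkj : k < j) (β' : Fin (x + 1) → List ℕ) :
    graft k β R S j (restrictBelow j β') =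
      if β' k ∈ R then S (β' k) j (restrictBelow j β') else ∅ :=
  graft_of_gt hkj _

theorem mem_graft_below {m : ℕ} (hkm : (k : ℕ) < m)
    (hS : ∀ σ ∈ R, ∀ (j : Fin (x + 1)) ρ, (j : ℕ) < k + 1 → S σ j ρ = {Function.update β k σ j})
    {β' : Fin (x + 1) → List ℕ}
    (hβ' : ∀ j : Fin (x + 1), (j : ℕ) < m → β' j ∈ graft k β R S j (restrictBelow j β')) :
    β' k ∈ R ∧ ∀ j : Fin (x + 1), (j : ℕ) < m → β' j ∈ S (β' k) j (restrictBelow j β') := by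
  have hk := hβ' k hkm
  rw [graft_self] at hk
  refine ⟨hk, fun j hj => ?_⟩
  rcases lt_trichotomy j k with hjk | rfl | hkj
  · have := hβ' j hj
    rw [graft_of_lt hjk, Finset.mem_singleton] at this
    rw [hS _ hk j _ (by omega), Function.update_of_ne hjk.ne, this, Finset.mem_singleton]
  · rw [hS _ hk j _ (by omega), Function.update_self, Finset.mem_singleton]
  · have := hβ' j hj
    rwa [graft_restrictBelow_of_gt hkj, if_pos hk] at this

theorem IsGoodSubsystemAbove.graft {T : TreeSystem x} {n : Fin (x + 1) → ℕ}
    {α : Fin (x + 1) → List ℕ} {P : Set (Fin (x + 1) → List ℕ)}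
    (hR : IsTree R) (hRgood : GoodFrom (n k) R (α k))
    (hS : ∀ σ ∈ R, IsGoodSubsystemAbove T n α P (k + 1) (Function.update β k σ) (S σ)) :
    IsGoodSubsystemAbove T n α P k β (graft k β R S) := by
  have hS' := fun σ hσ => (hS σ hσ).eq_singleton
  refine ⟨fun j ρ => ?_, fun j ρ hj => graft_of_lt hj ρ, fun β' hβ' => ?_, ?_, fun β' hβ' => ?_⟩
  · rcases lt_trichotomy j k with hjk | rfl | hkj
    · rw [graft_of_lt hjk]
      intro σ hσ τ hτ _
      rw [Finset.mem_singleton.1 hσ, Finset.mem_singleton.1 hτ]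
    · rwa [graft_self]
    · rw [graft_of_gt hkj]
      split_ifs with h
      · exact (hS _ h).isTreeSystem j ρ
      · exact fun σ hσ => absurd hσ (Finset.notMem_empty σ)
  · obtain ⟨hk, hβ'⟩ := mem_graft_below (m := x + 1) k.isLt hS' fun j _ => hβ' j
    exact (hS _ hk).sysElem β' fun j => hβ' j j.isLt
  · intro j β' hj hβ'
    rcases eq_or_lt_of_le hj with hjk | hkj
    · obtain rfl : k = j := Fin.ext hjk
      rwa [graft_self]
    · obtain ⟨hk, hβ'⟩ := mem_graft_below hkj hS' hβ'
      rw [graft_restrictBelow_of_gt hkj, if_pos hk]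
      exact (hS _ hk).goodFrom j β' hkj hβ'
  · obtain ⟨hk, hβ'⟩ := mem_graft_below (m := x + 1) k.isLt hS' fun j _ => hβ' j
    exact (hS _ hk).mem β' fun j => hβ' j j.isLt

end Graft

section Cover

variable {x : ℕ} {ι : Type*} [Fintype ι] {T : TreeSystem x} {n : Fin (x + 1) → ℕ}
  {α : Fin (x + 1) → List ℕ} {P : ι → Set (Fin (x + 1) → List ℕ)}

theorem exists_isGoodSubsystemAbove (hT : IsTreeSystem T) (hn : ∀ j, 1 ≤ n j)
    (hgood : SysGoodFrom (fun j => Fintype.card ι * n j) T α)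
    (hcov : ∀ β, SysElem T β → ∃ i, β ∈ P i) {k : ℕ} (hk : k ≤ x + 1)
    (β : Fin (x + 1) → List ℕ)
    (hβ : ∀ j : Fin (x + 1), (j : ℕ) < k → β j ∈ T j (restrictBelow j β)) :
    ∃ i S, IsGoodSubsystemAbove T n α (P i) k β S := by
  induction hk using Nat.decreasingInduction generalizing β with
  | self =>
    have hβT : SysElem T β := fun j => hβ j j.isLt
    obtain ⟨i, hi⟩ := hcov β hβT
    exact ⟨i, _, isGoodSubsystemAbove_pathSystem hβT hi⟩
  | of_succ k hk ih =>
    set K : Fin (x + 1) := ⟨k, hk⟩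
    have hsucc : ∀ σ ∈ T K (restrictBelow K β),
        ∃ i S, IsGoodSubsystemAbove T n α (P i) (k + 1) (Function.update β K σ) S := by
      intro σ hσ
      refine ih _ fun j hj => ?_
      rcases lt_or_eq_of_le (Nat.le_of_lt_succ hj) with hjk | hjk
      · have hjK : j < K := hjk
        rw [Function.update_of_ne hjK.ne, restrictBelow_update hjK.le]
        exact hβ j hjk
      · obtain rfl : j = K := Fin.ext hjk
        rwa [Function.update_self, restrictBelow_update le_rfl]
    have hTK := hgood K β hβ
    obtain ⟨σ₀, hσ₀⟩ := hTK.1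
    obtain ⟨i₀, -⟩ := hsucc σ₀ hσ₀
    have : Nonempty ι := ⟨i₀⟩
    have : Nonempty (TreeSystem x) := ⟨fun _ _ => ∅⟩
    choose! col S hS using hsucc
    obtain ⟨i, R, hRT, hRgood, hRcol⟩ := hTK.exists_monochromatic_subset (hn K) col
    have hR : IsTree R := fun σ hσ τ hτ => hT K _ σ (hRT hσ) τ (hRT hτ)
    refine ⟨i, graft K β R S, IsGoodSubsystemAbove.graft hR hRgood fun σ hσ => ?_⟩
    rw [← hRcol σ hσ]
    exact hS σ (hRT hσ)

theorem SysGoodFrom.exists_monochromatic_subsystem (hT : IsTreeSystem T) (hn : ∀ j, 1 ≤ n j)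
    (hgood : SysGoodFrom (fun j => Fintype.card ι * n j) T α)
    (hcov : ∀ β, SysElem T β → ∃ i, β ∈ P i) :
    ∃ i, ∃ S : TreeSystem x, IsTreeSystem S ∧
      (∀ β, SysElem S β → SysElem T β) ∧ SysGoodFromFor n S α (P i) := by
  obtain ⟨i, S, hS⟩ := exists_isGoodSubsystemAbove hT hn hgood hcov (Nat.zero_le _)
    (fun _ => []) fun _ hj => absurd hj (Nat.not_lt_zero _)
  exact ⟨i, S, hS.isTreeSystem, hS.sysElem, fun j β hβ => hS.goodFrom j β (Nat.zero_le _) hβ,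
    hS.mem⟩

end Cover

theorem sys_good_subset_of_cover_general (a x : ℕ)
    (n : Fin (x + 1) → ℕ) (hn : ∀ i, 1 ≤ n i)
    (T : TreeSystem x) (hT : IsTreeSystem T) (α : Fin (x + 1) → List ℕ)
    (hgood : SysGoodFrom (fun i => 2 ^ (a - 1) * n i) T α)
    (P : Fin a → Set (Fin (x + 1) → List ℕ))
    (hcov : ∀ β, SysElem T β → β ∈ ⋃ i, P i) :
    ∃ i : Fin a, ∃ S : TreeSystem x, IsTreeSystem S ∧
      (∀ β, SysElem S β → SysElem T β) ∧ SysGoodFromFor n S α (P i) := by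
  have hcard : Fintype.card (Fin a) ≤ 2 ^ (a - 1) := by
    have := Nat.lt_two_pow_self (n := a - 1)
    rw [Fintype.card_fin]
    omega
  exact SysGoodFrom.exists_monochromatic_subsystem hT hn
    (hgood.mono fun j => Nat.mul_le_mul_right _ hcard) fun β hβ => Set.mem_iUnion.1 (hcov β hβ)

/-- If the system `T⃗` is `(2^{a−1}n_0, …, 2^{a−1}n_x)`-good from `α⃗` and every
element of `T⃗` belongs to `P_1 ∪ ⋯ ∪ P_a`, then for some `i` there is a system,
all of whose elements are elements of `T⃗`, which is `n⃗`-good from `α⃗` for `P_i`. -/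
theorem sys_good_subset_of_cover (a x : ℕ) (ha : 1 ≤ a)
    (n : Fin (x + 1) → ℕ) (hn : ∀ i, 1 ≤ n i)
    (T : TreeSystem x) (hT : IsTreeSystem T) (α : Fin (x + 1) → List ℕ)
    (hgood : SysGoodFrom (fun i => 2 ^ (a - 1) * n i) T α)
    (P : Fin a → Set (Fin (x + 1) → List ℕ))
    (hcov : ∀ β, SysElem T β → β ∈ ⋃ i, P i) :
    ∃ i : Fin a, ∃ S : TreeSystem x, IsTreeSystem S ∧
      (∀ β, SysElem S β → SysElem T β) ∧ SysGoodFromFor n S α (P i) :=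
  sys_good_subset_of_cover_general a x n hn T hT α hgood P hcov
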